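/- arXiv:0912.5178 — 7 statements merged into one kernel-verified Lean document; each statement's English description precedes it below -/
import Mathlib

section
/- Let (𝓘_t)_{t∈L} be a family of ideals of the prepaving ℰ such that, for every G ∈ ℰ, the set {t ∈ L : G ∈ 𝓘_t} is a filter of L possessing an infimum, and define ν : ℰ → L by ν(G) = ⋀{t ∈ L : G ∈ 𝓘_t}. If the family is right-continuous, i.e. 𝓘_t = ⋂_{s ≫ t} 𝓘_s for all t ∈ L, then ν is a maxitive measure on ℰ. -/
open Set

variable {E L : Type*}

/-- A prepaving on `E`: a collection of subsets containing `∅` and closed under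
(binary, hence finite) unions. -/
def IsPrepaving (ℰ : Set (Set E)) : Prop :=
  ∅ ∈ ℰ ∧ ∀ A ∈ ℰ, ∀ B ∈ ℰ, A ∪ B ∈ ℰ

/-- A paving on `E`: a prepaving covering `E` such that, for every `x`, the
collection `{G ∈ ℰ : x ∈ G}` is nonempty and filtered under inclusion. -/
def IsPaving (ℰ : Set (Set E)) : Prop :=
  IsPrepaving ℰ ∧ ∀ x : E, (∃ G ∈ ℰ, x ∈ G) ∧
    ∀ G ∈ ℰ, x ∈ G → ∀ G' ∈ ℰ, x ∈ G' → ∃ H ∈ ℰ, x ∈ H ∧ H ⊆ G ∧ H ⊆ G'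

/-- An ideal of the prepaving `ℰ`: a nonempty subset of `ℰ` closed under finite
unions and downward closed (within `ℰ`). -/
def IsIdealOf (ℰ 𝓘 : Set (Set E)) : Prop :=
  𝓘.Nonempty ∧ 𝓘 ⊆ ℰ ∧ (∀ A ∈ 𝓘, ∀ B ∈ 𝓘, A ∪ B ∈ 𝓘) ∧
    ∀ A ∈ ℰ, ∀ B ∈ 𝓘, A ⊆ B → A ∈ 𝓘

/-- A filter of a poset: a nonempty, (downward) filtered, upward-closed subset. -/
def IsFilterSet [PartialOrder L] (F : Set L) : Prop :=
  F.Nonempty ∧ (∀ x ∈ F, ∀ y ∈ F, ∃ z ∈ F, z ≤ x ∧ z ≤ y) ∧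
    ∀ x ∈ F, ∀ y : L, x ≤ y → y ∈ F

/-- `y` is way-above `x`: for every filter `F` possessing an infimum `a`,
`a ≤ x` implies `y ∈ F`. -/
def WayAbove [PartialOrder L] (y x : L) : Prop :=
  ∀ F : Set L, IsFilterSet F → ∀ a : L, IsGLB F a → a ≤ x → y ∈ F

/-- A continuous poset: for every `x`, `↟x = {y : y ≫ x}` is a filter with
infimum `x`. -/
def ContinuousPoset (L : Type*) [PartialOrder L] : Prop :=
  ∀ x : L, IsFilterSet {y : L | WayAbove y x} ∧ IsGLB {y : L | WayAbove y x} x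

/-- A domain: a continuous poset in which every filter has an infimum. -/
def DomainPoset (L : Type*) [PartialOrder L] : Prop :=
  ContinuousPoset L ∧ ∀ F : Set L, IsFilterSet F → ∃ a : L, IsGLB F a

/-- A locally complete poset: every upper-bounded subset has a supremum. -/
def LocallyComplete (L : Type*) [PartialOrder L] : Prop :=
  ∀ S : Set L, BddAbove S → ∃ a : L, IsLUB S a

/-- A maxitive measure on `ℰ`: `ν ∅ = 0`, and for every finite family of
elements of `ℰ` whose union lies in `ℰ`, the supremum of the values exists and
equals the value of the union. -/
def IsMaxitive [PartialOrder L] [OrderBot L] (ℰ : Set (Set E)) (ν : Set E → L) : Prop :=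
  ν ∅ = ⊥ ∧ ∀ S : Finset (Set E), (∀ G ∈ S, G ∈ ℰ) → ⋃₀ (S : Set (Set E)) ∈ ℰ →
    IsLUB (ν '' (S : Set (Set E))) (ν (⋃₀ (S : Set (Set E))))

/-- A completely maxitive measure on `ℰ`: as above, but for arbitrary families. -/
def IsCompletelyMaxitive [PartialOrder L] [OrderBot L] (ℰ : Set (Set E)) (ν : Set E → L) : Prop :=
  ν ∅ = ⊥ ∧ ∀ 𝒢 : Set (Set E), 𝒢 ⊆ ℰ → ⋃₀ 𝒢 ∈ ℰ →
    IsLUB (ν '' 𝒢) (ν (⋃₀ 𝒢))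

open Classical in
/-- The infimum of `S` when it exists, `⊥` otherwise. -/
noncomputable def pInf [PartialOrder L] [OrderBot L] (S : Set L) : L :=
  if h : ∃ a : L, IsGLB S a then h.choose else ⊥

open Classical in
/-- The supremum of `S` when it exists, `⊥` otherwise. -/
noncomputable def pSup [PartialOrder L] [OrderBot L] (S : Set L) : L :=
  if h : ∃ a : L, IsLUB S a then h.choose else ⊥

/-- `ℰ*`: the collection of subsets `A` of `E` such that `{G ∈ ℰ : A ⊆ G}` is
nonempty and filtered under inclusion. -/
def EStar (ℰ : Set (Set E)) : Set (Set E) :=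
  {A | (∃ G ∈ ℰ, A ⊆ G) ∧
    ∀ G ∈ ℰ, A ⊆ G → ∀ G' ∈ ℰ, A ⊆ G' → ∃ H ∈ ℰ, A ⊆ H ∧ H ⊆ G ∧ H ⊆ G'}

/-- The extension `ν*` of `ν`: `ν*(A) = ⋀ {ν G : G ∈ ℰ, A ⊆ G}`. -/
noncomputable def nuStar [PartialOrder L] [OrderBot L] (ℰ : Set (Set E))
    (ν : Set E → L) (A : Set E) : L :=
  pInf (ν '' {G ∈ ℰ | A ⊆ G})

/-- `𝒦`: the compact subsets of `E` for the topology generated by `ℰ`. -/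
def Kpt (ℰ : Set (Set E)) : Set (Set E) :=
  {K | @IsCompact E (TopologicalSpace.generateFrom ℰ) K}

/-- `ℱ = {F ⊆ E : F ∈ ℰ* and Fᶜ ∈ ℰ}`. -/
def Fcl (ℰ : Set (Set E)) : Set (Set E) :=
  {F | F ∈ EStar ℰ ∧ Fᶜ ∈ ℰ}

/-- `ℋ = 𝒦 ∩ ℱ`. -/
def Hcf (ℰ : Set (Set E)) : Set (Set E) := Kpt ℰ ∩ Fcl ℰ

/-- The regular part `⌊ν⌋(G) = ⊕ {ν*(K) : K ∈ 𝒦, K ⊆ G}`. -/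
noncomputable def regPart [PartialOrder L] [OrderBot L] (ℰ : Set (Set E))
    (ν : Set E → L) (G : Set E) : L :=
  pSup (nuStar ℰ ν '' {K ∈ Kpt ℰ | K ⊆ G})

/-- `r` is the residual part of `ν`: the smallest maxitive measure such that
`ν = ⌊ν⌋ ⊕ r` on `ℰ`. -/
def IsResidualPart [Lattice L] [OrderBot L] (ℰ : Set (Set E)) (ν r : Set E → L) : Prop :=
  IsMaxitive ℰ r ∧ (∀ G ∈ ℰ, ν G = regPart ℰ ν G ⊔ r G) ∧
    ∀ τ : Set E → L, IsMaxitive ℰ τ → (∀ G ∈ ℰ, ν G = regPart ℰ ν G ⊔ τ G) →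
      ∀ G ∈ ℰ, r G ≤ τ G
/-- a right-continuous family of ideals, whose fibers are filters
with infima, defines a maxitive measure via `ν(G) = ⋀ {t : G ∈ 𝓘 t}`. -/
theorem rightContinuous_ideals_maxitive [PartialOrder L] [OrderBot L]
    (ℰ : Set (Set E)) (hpre : IsPrepaving ℰ)
    (𝓘 : L → Set (Set E)) (hid : ∀ t : L, IsIdealOf ℰ (𝓘 t))
    (hfil : ∀ G ∈ ℰ, IsFilterSet {t : L | G ∈ 𝓘 t})
    (ν : Set E → L) (hν : ∀ G ∈ ℰ, IsGLB {t : L | G ∈ 𝓘 t} (ν G))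
    (hrc : ∀ t : L, 𝓘 t = {G : Set E | ∀ s : L, WayAbove s t → G ∈ 𝓘 s}) :
    IsMaxitive ℰ ν := by
  have hbot : ∀ t : L, (∅ : Set E) ∈ 𝓘 t := by
    intro t
    obtain ⟨B, hB⟩ := (hid t).1
    exact (hid t).2.2.2 ∅ hpre.1 B hB (Set.empty_subset B)
  have hun : ∀ t : L, ∀ S : Finset (Set E), (∀ G ∈ S, G ∈ 𝓘 t) →
      ⋃₀ (S : Set (Set E)) ∈ 𝓘 t := by
    intro t S
    classical
    induction S using Finset.induction with
    | empty => intro _; simpa using hbot t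
    | @insert A S hA ih =>
      intro hmem
      rw [Finset.coe_insert, Set.sUnion_insert]
      exact (hid t).2.2.1 _ (hmem _ (Finset.mem_insert_self _ _)) _
        (ih fun G hG => hmem G (Finset.mem_insert_of_mem hG))
  constructor
  · have h := hν ∅ hpre.1
    exact le_antisymm (h.1 (by simp [hbot ⊥])) bot_le
  · intro S hS hU
    constructor
    · rintro x ⟨G, hG, rfl⟩
      have hGE : G ∈ ℰ := hS G hG
      have hsub : {t : L | ⋃₀ (S : Set (Set E)) ∈ 𝓘 t} ⊆ {t : L | G ∈ 𝓘 t} := by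
        intro t ht
        exact (hid t).2.2.2 G hGE _ ht (Set.subset_sUnion_of_mem hG)
      exact (hν _ hU).2 fun t ht => (hν G hGE).1 (hsub ht)
    · intro u hu
      have key : ∀ s : L, WayAbove s u → ⋃₀ (S : Set (Set E)) ∈ 𝓘 s := by
        intro s hs
        apply hun s
        intro G hG
        have hGE : G ∈ ℰ := hS G hG
        exact hs _ (hfil G hGE) _ (hν G hGE) (hu ⟨G, hG, rfl⟩)
      have hmem : ⋃₀ (S : Set (Set E)) ∈ 𝓘 u := by
        rw [hrc u]; exact key
      exact (hν _ hU).1 hmem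
end

section
/- Assume L is a continuous poset. A map ν : ℰ → L is a maxitive measure if and only if there exists a family (𝓘_t)_{t∈L} of ideals of ℰ such that, for every G ∈ ℰ, the set {t ∈ L : G ∈ 𝓘_t} is a filter of L possessing an infimum and ν(G) = ⋀{t ∈ L : G ∈ 𝓘_t}. -/
open Set

variable {E L : Type*}

lemma empty_mem_ideal {ℰ 𝓘 : Set (Set E)} (hI : IsIdealOf ℰ 𝓘) (hempty : ∅ ∈ ℰ) :
    (∅ : Set E) ∈ 𝓘 := by
  obtain ⟨B, hB⟩ := hI.1
  exact hI.2.2.2 ∅ hempty B hB (empty_subset B)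

lemma ideal_sUnion {ℰ 𝓘 : Set (Set E)} (hI : IsIdealOf ℰ 𝓘) (hempty : ∅ ∈ ℰ)
    (S : Finset (Set E)) (hS : ∀ G ∈ S, G ∈ 𝓘) : ⋃₀ (S : Set (Set E)) ∈ 𝓘 := by
  classical
  induction S using Finset.induction_on with
  | empty =>
      simp only [Finset.coe_empty, Set.sUnion_empty]
      exact empty_mem_ideal hI hempty
  | @insert A T _ ih =>
      simp only [Finset.coe_insert, Set.sUnion_insert]
      exact hI.2.2.1 A (hS A (Finset.mem_insert_self A T)) _
        (ih fun G hG => hS G (Finset.mem_insert_of_mem hG))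

lemma maxitive_pair [PartialOrder L] [OrderBot L] {ℰ : Set (Set E)} {ν : Set E → L}
    (hν : IsMaxitive ℰ ν) {A B : Set E} (hA : A ∈ ℰ) (hB : B ∈ ℰ)
    (hAB : A ∪ B ∈ ℰ) : IsLUB {ν A, ν B} (ν (A ∪ B)) := by
  classical
  have h := hν.2 {A, B} (by
    intro G hG
    rcases Finset.mem_insert.1 hG with rfl | hG
    · exact hA
    · rw [Finset.mem_singleton.1 hG]; exact hB) (by
      simpa using hAB)
  simpa [Set.image_pair] using h

lemma maxitive_mono [PartialOrder L] [OrderBot L] {ℰ : Set (Set E)} {ν : Set E → L}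
    (hν : IsMaxitive ℰ ν) {A B : Set E} (hA : A ∈ ℰ) (hB : B ∈ ℰ)
    (hAB : A ⊆ B) : ν A ≤ ν B := by
  have h := maxitive_pair hν hA hB (by rwa [Set.union_eq_right.2 hAB])
  rw [Set.union_eq_right.2 hAB] at h
  exact h.1 (by simp)

/-- over a continuous poset, `ν` is maxitive iff it is represented
by a family of ideals whose fibers are filters with infimum `ν(G)`. -/
theorem maxitive_iff_represented_by_ideals [PartialOrder L] [OrderBot L]
    (hL : ContinuousPoset L)
    (ℰ : Set (Set E)) (hpre : IsPrepaving ℰ) (ν : Set E → L) :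
    IsMaxitive ℰ ν ↔
      ∃ 𝓘 : L → Set (Set E), (∀ t : L, IsIdealOf ℰ (𝓘 t)) ∧
        ∀ G ∈ ℰ, IsFilterSet {t : L | G ∈ 𝓘 t} ∧ IsGLB {t : L | G ∈ 𝓘 t} (ν G) := by
  constructor
  · intro hν
    refine ⟨fun t => {G ∈ ℰ | ν G ≤ t}, fun t => ?_, fun G hG => ?_⟩
    · refine ⟨⟨∅, hpre.1, by rw [hν.1]; exact bot_le⟩, fun G hG => hG.1, ?_, ?_⟩
      · rintro A ⟨hAE, hAt⟩ B ⟨hBE, hBt⟩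
        have hU : A ∪ B ∈ ℰ := hpre.2 A hAE B hBE
        refine ⟨hU, (maxitive_pair hν hAE hBE hU).2 ?_⟩
        rintro x hx
        rcases hx with rfl | rfl
        · exact hAt
        · exact hBt
      · rintro A hAE B ⟨hBE, hBt⟩ hAB
        exact ⟨hAE, le_trans (maxitive_mono hν hAE hBE hAB) hBt⟩
    · have hset : {t : L | G ∈ {G' ∈ ℰ | ν G' ≤ t}} = Set.Ici (ν G) := by
        ext t; simp [hG]
      rw [hset]
      exact ⟨⟨⟨ν G, le_refl _⟩,
        fun x hx y hy => ⟨ν G, le_refl _, hx, hy⟩,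
        fun x hx y hxy => le_trans hx hxy⟩, isGLB_Ici⟩
  · rintro ⟨𝓘, hIdeal, hRep⟩
    have hbot : ν ∅ = ⊥ := by
      have h1 : {t : L | (∅ : Set E) ∈ 𝓘 t} = Set.univ :=
        eq_univ_of_forall fun t => empty_mem_ideal (hIdeal t) hpre.1
      have h2 := (hRep ∅ hpre.1).2
      rw [h1] at h2
      exact le_antisymm (h2.1 (mem_univ ⊥)) bot_le
    refine ⟨hbot, fun S hS hU => ?_⟩
    constructor
    · rintro x ⟨G, hG, rfl⟩
      have hGmem : G ∈ S := hG
      have hGE : G ∈ ℰ := hS G hGmem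
      -- ν G is a lower bound of {t | ⋃₀ S ∈ 𝓘 t}
      refine (hRep _ hU).2.2 fun t ht => ?_
      exact (hRep G hGE).2.1 <|
        (hIdeal t).2.2.2 G hGE _ ht (subset_sUnion_of_mem hG)
    · intro b hb
      obtain ⟨hFilt, hGLB⟩ := hL b
      refine hGLB.2 fun y hy => ?_
      -- hy : WayAbove y b; show ν (⋃₀ S) ≤ y
      have hmem : ∀ G ∈ S, G ∈ 𝓘 y := by
        intro G hGmem
        have hGE : G ∈ ℰ := hS G hGmem
        have hνG : ν G ≤ b := hb ⟨G, hGmem, rfl⟩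
        exact hy _ (hRep G hGE).1 _ (hRep G hGE).2 hνG
      have : ⋃₀ (S : Set (Set E)) ∈ 𝓘 y := ideal_sUnion (hIdeal y) hpre.1 S hmem
      exact (hRep _ hU).2.1 this
end

section
/- Assume L is a continuous poset, let (𝓘_t)_{t∈L} be a family of ideals of ℰ such that, for every G ∈ ℰ, {t ∈ L : G ∈ 𝓘_t} is a filter of L possessing an infimum, and let ν(G) = ⋀{t ∈ L : G ∈ 𝓘_t}. Then (𝓘_t)_{t∈L} is right-continuous (i.e. 𝓘_t = ⋂_{s ≫ t} 𝓘_s for all t ∈ L) if and only if 𝓘_t = {G ∈ ℰ : t ≥ ν(G)} for all t ∈ L. -/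
open Set

variable {E L : Type*}

/-- the representing family of ideals is right-continuous iff
`𝓘 t = {G ∈ ℰ : ν G ≤ t}` for all `t`. -/
theorem rightContinuous_iff_ideals_eq [PartialOrder L] [OrderBot L]
    (hL : ContinuousPoset L)
    (ℰ : Set (Set E)) (hpre : IsPrepaving ℰ)
    (𝓘 : L → Set (Set E)) (hid : ∀ t : L, IsIdealOf ℰ (𝓘 t))
    (hfil : ∀ G ∈ ℰ, IsFilterSet {t : L | G ∈ 𝓘 t})
    (ν : Set E → L) (hν : ∀ G ∈ ℰ, IsGLB {t : L | G ∈ 𝓘 t} (ν G)) :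
    (∀ t : L, 𝓘 t = {G : Set E | ∀ s : L, WayAbove s t → G ∈ 𝓘 s}) ↔
      ∀ t : L, 𝓘 t = {G ∈ ℰ | ν G ≤ t} := by
  constructor
  · intro h t
    ext G
    constructor
    · intro hG
      have hGE : G ∈ ℰ := (hid t).2.1 hG
      exact ⟨hGE, (hν G hGE).1 hG⟩
    · rintro ⟨hGE, hνt⟩
      rw [h t]
      intro s hs
      exact hs {u | G ∈ 𝓘 u} (hfil G hGE) (ν G) (hν G hGE) hνt
  · intro h t
    ext G
    constructor
    · intro hG s hs
      rw [h t] at hG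
      obtain ⟨hGE, hνt⟩ := hG
      have hts : t ≤ s := (hL t).2.1 hs
      rw [h s]
      exact ⟨hGE, hνt.trans hts⟩
    · intro hG
      obtain ⟨s₀, hs₀⟩ := (hL t).1.1
      have hGE : G ∈ ℰ := (hid s₀).2.1 (hG s₀ hs₀)
      have hlb : ν G ∈ lowerBounds {y : L | WayAbove y t} := by
        intro s hs
        exact (hν G hGE).1 (hG s hs)
      have : ν G ≤ t := (hL t).2.2 hlb
      rw [h t]
      exact ⟨hGE, this⟩
end

section
/- Assume L is a domain, ℰ is a paving on E, and ν is an L-valued maxitive measure on ℰ. For G ∈ ℰ, if either the set {ν*(K) : K ∈ 𝒦, K ⊆ G} or the set {c*(x) : x ∈ G} has a supremum in L, then both suprema exist and ⊕_{K ∈ 𝒦, K ⊆ G} ν*(K) = ⊕_{x ∈ G} c*(x). -/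
open Set

variable {E L : Type*}

lemma pInf_le_mem [PartialOrder L] [OrderBot L] {S : Set L} {s : L} (hs : s ∈ S) :
    pInf S ≤ s := by
  unfold pInf
  split_ifs with h
  · exact h.choose_spec.1 hs
  · exact bot_le

lemma isGLB_pInf [PartialOrder L] [OrderBot L] {S : Set L} (h : ∃ a : L, IsGLB S a) :
    IsGLB S (pInf S) := by
  unfold pInf
  rw [dif_pos h]
  exact h.choose_spec

lemma sUnion_finset_mem {ℰ : Set (Set E)} (hp : IsPrepaving ℰ) :
    ∀ S : Finset (Set E), (∀ A ∈ S, A ∈ ℰ) → ⋃₀ (S : Set (Set E)) ∈ ℰ := by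
  intro S
  classical
  induction S using Finset.induction_on with
  | empty => intro _; simpa using hp.1
  | @insert A S hAS ih =>
    intro hS
    rw [Finset.coe_insert, Set.sUnion_insert]
    exact hp.2 _ (hS _ (Finset.mem_insert_self _ _)) _
      (ih fun B hB => hS _ (Finset.mem_insert_of_mem hB))

/-- In a domain, a nonempty downward-filtered set has a greatest lower bound. -/
lemma exists_isGLB_of_filtered [PartialOrder L] (hL : DomainPoset L) {D : Set L}
    (hne : D.Nonempty) (hfil : ∀ x ∈ D, ∀ y ∈ D, ∃ z ∈ D, z ≤ x ∧ z ≤ y) :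
    ∃ a : L, IsGLB D a := by
  obtain ⟨d₀, hd₀⟩ := hne
  have hF : IsFilterSet {z : L | ∃ d ∈ D, d ≤ z} := by
    refine ⟨⟨d₀, d₀, hd₀, le_rfl⟩, ?_, ?_⟩
    · rintro x ⟨d₁, hd₁, h₁⟩ y ⟨d₂, hd₂, h₂⟩
      obtain ⟨z, hz, hz₁, hz₂⟩ := hfil d₁ hd₁ d₂ hd₂
      exact ⟨z, ⟨z, hz, le_rfl⟩, hz₁.trans h₁, hz₂.trans h₂⟩
    · rintro x ⟨d, hd, h⟩ y hxy
      exact ⟨d, hd, h.trans hxy⟩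
  obtain ⟨a, ha⟩ := hL.2 _ hF
  refine ⟨a, fun d hd => ha.1 ⟨d, hd, le_rfl⟩, fun c hc => ha.2 ?_⟩
  rintro f ⟨d, hd, h⟩
  exact (hc hd).trans h

/-- If `y ≫ b`, `D` is nonempty filtered with `IsGLB D a` and `a ≤ b`, then
some element of `D` is `≤ y`. -/
lemma wayAbove_exists_le [PartialOrder L] {y b : L} (hy : WayAbove y b) {D : Set L}
    (hne : D.Nonempty) (hfil : ∀ x ∈ D, ∀ y ∈ D, ∃ z ∈ D, z ≤ x ∧ z ≤ y)
    {a : L} (hglb : IsGLB D a) (hab : a ≤ b) : ∃ d ∈ D, d ≤ y := by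
  obtain ⟨d₀, hd₀⟩ := hne
  have hF : IsFilterSet {z : L | ∃ d ∈ D, d ≤ z} := by
    refine ⟨⟨d₀, d₀, hd₀, le_rfl⟩, ?_, ?_⟩
    · rintro x ⟨d₁, hd₁, h₁⟩ y' ⟨d₂, hd₂, h₂⟩
      obtain ⟨z, hz, hz₁, hz₂⟩ := hfil d₁ hd₁ d₂ hd₂
      exact ⟨z, ⟨z, hz, le_rfl⟩, hz₁.trans h₁, hz₂.trans h₂⟩
    · rintro x ⟨d, hd, h⟩ y' hxy
      exact ⟨d, hd, h.trans hxy⟩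
  have hglbF : IsGLB {z : L | ∃ d ∈ D, d ≤ z} a := by
    refine ⟨?_, fun c hc => hglb.2 fun d hd => hc ⟨d, hd, le_rfl⟩⟩
    rintro f ⟨d, hd, h⟩
    exact (hglb.1 hd).trans h
  exact hy _ hF a hglbF hab

/-- for `G ∈ ℰ`, if either `{ν*(K) : K ∈ 𝒦, K ⊆ G}` or
`{c*(x) : x ∈ G}` has a supremum, then both do and the suprema agree. -/
theorem sup_nuStar_compact_eq_sup_density [PartialOrder L] [OrderBot L]
    (hL : DomainPoset L)
    (ℰ : Set (Set E)) (hpav : IsPaving ℰ)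
    (ν : Set E → L) (hν : IsMaxitive ℰ ν)
    (G : Set E) (hG : G ∈ ℰ)
    (h : (∃ a : L, IsLUB (nuStar ℰ ν '' {K ∈ Kpt ℰ | K ⊆ G}) a) ∨
         (∃ a : L, IsLUB ((fun x : E => nuStar ℰ ν {x}) '' G) a)) :
    ∃ a : L, IsLUB (nuStar ℰ ν '' {K ∈ Kpt ℰ | K ⊆ G}) a ∧
      IsLUB ((fun x : E => nuStar ℰ ν {x}) '' G) a := by
  classical
  letI : TopologicalSpace E := TopologicalSpace.generateFrom ℰ
  -- filteredness and GLB facts for singletons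
  have hsing : ∀ x : E, (ν '' {H ∈ ℰ | {x} ⊆ H}).Nonempty ∧
      (∀ u ∈ ν '' {H ∈ ℰ | {x} ⊆ H}, ∀ v ∈ ν '' {H ∈ ℰ | {x} ⊆ H},
        ∃ w ∈ ν '' {H ∈ ℰ | {x} ⊆ H}, w ≤ u ∧ w ≤ v) := by
    intro x
    constructor
    · obtain ⟨H, hH, hxH⟩ := (hpav.2 x).1
      exact ⟨ν H, H, ⟨hH, Set.singleton_subset_iff.mpr hxH⟩, rfl⟩
    · rintro _ ⟨H₁, ⟨hH₁, hx₁⟩, rfl⟩ _ ⟨H₂, ⟨hH₂, hx₂⟩, rfl⟩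
      obtain ⟨H, hH, hxH, hs₁, hs₂⟩ := (hpav.2 x).2 H₁ hH₁
        (Set.singleton_subset_iff.mp hx₁) H₂ hH₂ (Set.singleton_subset_iff.mp hx₂)
      exact ⟨ν H, ⟨H, ⟨hH, Set.singleton_subset_iff.mpr hxH⟩, rfl⟩,
        maxitive_mono hν hH hH₁ hs₁, maxitive_mono hν hH hH₂ hs₂⟩
  have key : ∀ b ∈ upperBounds ((fun x : E => nuStar ℰ ν {x}) '' G),
      ∀ K ∈ Kpt ℰ, K ⊆ G → nuStar ℰ ν K ≤ b := by
    intro b hb K hK hKG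
    have hKc : IsCompact K := hK
    have hyb : ∀ y : L, WayAbove y b → nuStar ℰ ν K ≤ y := by
      intro y hy
      have hx : ∀ x : E, x ∈ K → ∃ H, H ∈ ℰ ∧ x ∈ H ∧ ν H ≤ y := by
        intro x hxK
        obtain ⟨hne, hfil⟩ := hsing x
        obtain ⟨a, ha⟩ := exists_isGLB_of_filtered hL hne hfil
        have hglb : IsGLB (ν '' {H ∈ ℰ | {x} ⊆ H}) (nuStar ℰ ν {x}) :=
          isGLB_pInf ⟨a, ha⟩
        have hcx : nuStar ℰ ν {x} ≤ b := hb ⟨x, hKG hxK, rfl⟩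
        obtain ⟨d, hd, hdy⟩ := wayAbove_exists_le hy hne hfil hglb hcx
        obtain ⟨H, ⟨hHℰ, hxH⟩, rfl⟩ := hd
        exact ⟨H, hHℰ, Set.singleton_subset_iff.mp hxH, hdy⟩
      choose! f hf1 hf2 hf3 using hx
      have hopen : ∀ x : K, IsOpen (f x) := fun x =>
        TopologicalSpace.GenerateOpen.basic _ (hf1 x x.2)
      have hcover : K ⊆ ⋃ x : K, f x := fun z hz =>
        Set.mem_iUnion.2 ⟨⟨z, hz⟩, hf2 z hz⟩
      obtain ⟨t, ht⟩ := hKc.elim_finite_subcover (fun x : K => f x) hopen hcover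
      set S : Finset (Set E) := t.image (fun x : K => f x) with hSdef
      have hSℰ : ∀ A ∈ S, A ∈ ℰ := by
        intro A hA
        obtain ⟨x, hxt, rfl⟩ := Finset.mem_image.1 hA
        exact hf1 x x.2
      have hUℰ := sUnion_finset_mem hpav.1 S hSℰ
      have hUeq : ⋃₀ (S : Set (Set E)) = ⋃ x ∈ t, f ↑x := by
        rw [hSdef, Finset.coe_image, Set.sUnion_image]
        simp
      have hlub := hν.2 S hSℰ hUℰ
      have hνU : ν (⋃₀ (S : Set (Set E))) ≤ y := by
        apply hlub.2
        rintro _ ⟨A, hA, rfl⟩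
        obtain ⟨x, hxt, rfl⟩ := Finset.mem_image.1 hA
        exact hf3 x x.2
      have hKU : K ⊆ ⋃₀ (S : Set (Set E)) := by rw [hUeq]; exact ht
      have hle := pInf_le_mem (S := ν '' {H ∈ ℰ | K ⊆ H})
        ⟨⋃₀ (S : Set (Set E)), ⟨hUℰ, hKU⟩, rfl⟩
      exact le_trans hle hνU
    exact ((hL.1 b).2).2 fun y hyW => hyb y hyW
  have hsub : ((fun x : E => nuStar ℰ ν {x}) '' G) ⊆
      (nuStar ℰ ν '' {K ∈ Kpt ℰ | K ⊆ G}) := by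
    rintro _ ⟨x, hx, rfl⟩
    exact ⟨{x}, ⟨isCompact_singleton, Set.singleton_subset_iff.mpr hx⟩, rfl⟩
  have hub_eq : upperBounds (nuStar ℰ ν '' {K ∈ Kpt ℰ | K ⊆ G}) =
      upperBounds ((fun x : E => nuStar ℰ ν {x}) '' G) := by
    apply Set.Subset.antisymm (upperBounds_mono_set hsub)
    intro b hb
    rintro _ ⟨K, ⟨hK, hKG⟩, rfl⟩
    exact key b hb K hK hKG
  rcases h with ⟨a, ha⟩ | ⟨a, ha⟩
  · exact ⟨a, ha, hub_eq ▸ ha.1, (congrArg lowerBounds hub_eq) ▸ ha.2⟩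
  · exact ⟨a, ⟨hub_eq ▸ ha.1, (congrArg lowerBounds hub_eq) ▸ ha.2⟩, ha⟩
end

section
/- Assume L is a locally continuous lattice, ℰ is a paving on E, and ν is an L-valued maxitive measure on ℰ. Then the regular part ⌊ν⌋, defined by ⌊ν⌋(G) = ⊕_{K ∈ 𝒦, K ⊆ G} ν*(K) for G ∈ ℰ, is a well-defined completely maxitive measure on ℰ with cardinal density c* : x ↦ ν*({x}), and it is the greatest completely maxitive measure on ℰ that is pointwise ≤ ν: every completely maxitive measure τ on ℰ with τ ≤ ν satisfies τ ≤ ⌊ν⌋. -/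
open Set

variable {E L : Type*}

section MyAux

variable [Lattice L] [OrderBot L]

private lemma myExists_isGLB (hlc : LocallyComplete L) {S : Set L} (hS : S.Nonempty) :
    ∃ a : L, IsGLB S a := by
  obtain ⟨y, hy⟩ := hS
  obtain ⟨a, ha⟩ := hlc (lowerBounds S) ⟨y, fun l hl => hl hy⟩
  exact ⟨a, fun z hz => ha.2 (fun l hl => hl hz), ha.1⟩

private lemma myPInf_isGLB (hlc : LocallyComplete L) {S : Set L} (hS : S.Nonempty) :
    IsGLB S (pInf S) := by
  have h : ∃ a : L, IsGLB S a := myExists_isGLB hlc hS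
  rw [pInf, dif_pos h]
  exact h.choose_spec

private lemma myPSup_isLUB (hlc : LocallyComplete L) {S : Set L} (hS : BddAbove S) :
    IsLUB S (pSup S) := by
  have h : ∃ a : L, IsLUB S a := hlc S hS
  rw [pSup, dif_pos h]
  exact h.choose_spec

private lemma myLe_of_forall_wayAbove (hc : ContinuousPoset L) {x b : L}
    (h : ∀ u : L, WayAbove u b → x ≤ u) : x ≤ b :=
  (hc b).2.2 (fun u hu => h u hu)

private lemma myMono_of_maxitive {ℰ : Set (Set E)} {ν : Set E → L}
    (hν : IsMaxitive ℰ ν) {A B : Set E} (hA : A ∈ ℰ) (hB : B ∈ ℰ) (hAB : A ⊆ B) :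
    ν A ≤ ν B := by
  classical
  have h := hν.2 {A, B} (by
    intro G hG
    rcases Finset.mem_insert.1 hG with rfl | hG
    · exact hA
    · rw [Finset.mem_singleton.1 hG]; exact hB) (by
    simp only [Finset.coe_insert, Finset.coe_singleton, Set.sUnion_insert, Set.sUnion_singleton,
      Set.union_eq_right.mpr hAB]
    exact hB)
  simp only [Finset.coe_insert, Finset.coe_singleton, Set.sUnion_insert, Set.sUnion_singleton,
    Set.union_eq_right.mpr hAB] at h
  exact h.1 ⟨A, by simp⟩

private lemma myMono_of_cmax {ℰ : Set (Set E)} {τ : Set E → L}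
    (hτ : IsCompletelyMaxitive ℰ τ) {A B : Set E} (hA : A ∈ ℰ) (hB : B ∈ ℰ) (hAB : A ⊆ B) :
    τ A ≤ τ B := by
  have h := hτ.2 {A, B} (by
    intro G hG
    rcases hG with rfl | hG
    · exact hA
    · rw [Set.mem_singleton_iff.1 hG]; exact hB) (by
    rw [Set.sUnion_pair, Set.union_eq_right.mpr hAB]; exact hB)
  rw [Set.sUnion_pair, Set.union_eq_right.mpr hAB] at h
  exact h.1 ⟨A, by simp⟩

private lemma myFinsetUnion_mem {ℰ : Set (Set E)} (hp : IsPrepaving ℰ)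
    (S : Finset (Set E)) (hS : ∀ G ∈ S, G ∈ ℰ) : ⋃₀ (S : Set (Set E)) ∈ ℰ := by
  classical
  induction S using Finset.induction with
  | empty => simpa using hp.1
  | @insert a s ha ih =>
    rw [Finset.coe_insert, Set.sUnion_insert]
    exact hp.2 _ (hS _ (Finset.mem_insert_self _ _)) _
      (ih fun G hG => hS G (Finset.mem_insert_of_mem hG))

private lemma myNuStar_le_of_subset {ℰ : Set (Set E)} (hlc : LocallyComplete L)
    {ν : Set E → L} {A G : Set E} (hG : G ∈ ℰ) (hAG : A ⊆ G) :
    nuStar ℰ ν A ≤ ν G := by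
  have hglb : IsGLB (ν '' {G' ∈ ℰ | A ⊆ G'}) (nuStar ℰ ν A) :=
    myPInf_isGLB hlc ⟨ν G, ⟨G, ⟨hG, hAG⟩, rfl⟩⟩
  exact hglb.1 ⟨G, ⟨hG, hAG⟩, rfl⟩

/-- The key way-above lemma: if `u ≫ b` and `ν*({x}) ≤ b`, then there is a small
neighborhood `G ∋ x` in `ℰ` with `μ G ≤ u`. -/
private lemma myExists_small_nbhd (hlc : LocallyComplete L)
    {ℰ : Set (Set E)} (hpav : IsPaving ℰ) {μ : Set E → L}
    (hmono : ∀ A ∈ ℰ, ∀ B ∈ ℰ, A ⊆ B → μ A ≤ μ B)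
    {b u : L} (hu : WayAbove u b) {x : E} (hxb : nuStar ℰ μ {x} ≤ b) :
    ∃ G ∈ ℰ, x ∈ G ∧ μ G ≤ u := by
  set F : Set L := {l : L | ∃ G ∈ ℰ, x ∈ G ∧ μ G ≤ l} with hF
  obtain ⟨G₀, hG₀, hxG₀⟩ := (hpav.2 x).1
  have hbase : IsGLB (μ '' {G' ∈ ℰ | ({x} : Set E) ⊆ G'}) (nuStar ℰ μ {x}) :=
    myPInf_isGLB hlc ⟨μ G₀, ⟨G₀, ⟨hG₀, Set.singleton_subset_iff.mpr hxG₀⟩, rfl⟩⟩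
  have hFfilt : IsFilterSet F := by
    refine ⟨⟨μ G₀, G₀, hG₀, hxG₀, le_rfl⟩, ?_, ?_⟩
    · rintro l₁ ⟨G₁, hG₁, hxG₁, hl₁⟩ l₂ ⟨G₂, hG₂, hxG₂, hl₂⟩
      obtain ⟨H, hH, hxH, hHG₁, hHG₂⟩ := (hpav.2 x).2 G₁ hG₁ hxG₁ G₂ hG₂ hxG₂
      exact ⟨μ H, ⟨H, hH, hxH, le_rfl⟩,
        le_trans (hmono H hH G₁ hG₁ hHG₁) hl₁, le_trans (hmono H hH G₂ hG₂ hHG₂) hl₂⟩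
    · rintro l ⟨G, hG, hxG, hl⟩ y hly
      exact ⟨G, hG, hxG, le_trans hl hly⟩
  have hFglb : IsGLB F (nuStar ℰ μ {x}) := by
    constructor
    · rintro l ⟨G, hG, hxG, hl⟩
      exact le_trans (hbase.1 ⟨G, ⟨hG, Set.singleton_subset_iff.mpr hxG⟩, rfl⟩) hl
    · intro c hcl
      refine hbase.2 ?_
      rintro l ⟨G, ⟨hG, hxG⟩, rfl⟩
      exact hcl ⟨G, hG, Set.singleton_subset_iff.mp hxG, le_rfl⟩
  exact hu F hFfilt _ hFglb hxb

/-- Central compactness lemma: the outer measure of a compact set is dominated by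
every upper bound of the cardinal densities of its points. -/
private lemma myNuStar_compact_le (hc : ContinuousPoset L) (hlc : LocallyComplete L)
    {ℰ : Set (Set E)} (hpav : IsPaving ℰ) {ν : Set E → L} (hν : IsMaxitive ℰ ν)
    {K : Set E} (hK : K ∈ Kpt ℰ) {b : L}
    (hb : ∀ x ∈ K, nuStar ℰ ν {x} ≤ b) : nuStar ℰ ν K ≤ b := by
  classical
  letI : TopologicalSpace E := TopologicalSpace.generateFrom ℰ
  have hmono : ∀ A ∈ ℰ, ∀ B ∈ ℰ, A ⊆ B → ν A ≤ ν B :=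
    fun A hA B hB hAB => myMono_of_maxitive hν hA hB hAB
  refine myLe_of_forall_wayAbove hc (fun u hu => ?_)
  have hcov : K ⊆ ⋃ G ∈ {G ∈ ℰ | ν G ≤ u}, (id G : Set E) := by
    intro x hx
    obtain ⟨G, hG, hxG, hGu⟩ := myExists_small_nbhd hlc hpav hmono hu (hb x hx)
    exact Set.mem_biUnion ⟨hG, hGu⟩ hxG
  have hopen : ∀ G ∈ {G ∈ ℰ | ν G ≤ u}, IsOpen (id G : Set E) :=
    fun G hG => TopologicalSpace.GenerateOpen.basic G hG.1
  obtain ⟨t, hts, htf, htc⟩ := hK.elim_finite_subcover_image hopen hcov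
  have htℰ : ∀ G ∈ htf.toFinset, G ∈ ℰ := by
    intro G hG
    exact (hts (htf.mem_toFinset.mp hG)).1
  have hunion : ⋃₀ ((htf.toFinset : Finset (Set E)) : Set (Set E)) ∈ ℰ := by
    exact myFinsetUnion_mem hpav.1 htf.toFinset htℰ
  have hcoe : ((htf.toFinset : Finset (Set E)) : Set (Set E)) = t := htf.coe_toFinset
  have hlub := hν.2 htf.toFinset htℰ hunion
  rw [hcoe] at hlub hunion
  have hKH : K ⊆ ⋃₀ t := by
    intro x hx
    obtain ⟨G, hGt, hxG⟩ := Set.mem_iUnion₂.1 (htc hx)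
    exact ⟨G, hGt, hxG⟩
  have h1 : nuStar ℰ ν K ≤ ν (⋃₀ t) := myNuStar_le_of_subset hlc hunion hKH
  refine le_trans h1 (hlub.2 ?_)
  rintro l ⟨G, hGt, rfl⟩
  exact (hts hGt).2

end MyAux

/-- over a locally continuous lattice, the regular part `⌊ν⌋` is
a well-defined completely maxitive measure with density `c*`, and it is the
greatest completely maxitive measure pointwise below `ν`. -/
theorem regPart_greatest_completelyMaxitive [Lattice L] [OrderBot L]
    (hc : ContinuousPoset L) (hlc : LocallyComplete L)
    (ℰ : Set (Set E)) (hpav : IsPaving ℰ)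
    (ν : Set E → L) (hν : IsMaxitive ℰ ν) :
    (∀ G ∈ ℰ, IsLUB (nuStar ℰ ν '' {K ∈ Kpt ℰ | K ⊆ G}) (regPart ℰ ν G)) ∧
    IsCompletelyMaxitive ℰ (regPart ℰ ν) ∧
    (∀ G ∈ ℰ, IsLUB ((fun x : E => nuStar ℰ ν {x}) '' G) (regPart ℰ ν G)) ∧
    (∀ G ∈ ℰ, regPart ℰ ν G ≤ ν G) ∧
    ∀ τ : Set E → L, IsCompletelyMaxitive ℰ τ → (∀ G ∈ ℰ, τ G ≤ ν G) →
      ∀ G ∈ ℰ, τ G ≤ regPart ℰ ν G := by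
  classical
  letI : TopologicalSpace E := TopologicalSpace.generateFrom ℰ
  have hmono : ∀ A ∈ ℰ, ∀ B ∈ ℰ, A ⊆ B → ν A ≤ ν B :=
    fun A hA B hB hAB => myMono_of_maxitive hν hA hB hAB
  -- Part 1: `regPart` is the LUB of `ν*` over the compact subsets of `G`.
  have part1 : ∀ G ∈ ℰ, IsLUB (nuStar ℰ ν '' {K ∈ Kpt ℰ | K ⊆ G}) (regPart ℰ ν G) := by
    intro G hG
    refine myPSup_isLUB hlc ⟨ν G, ?_⟩
    rintro l ⟨K, ⟨hK, hKG⟩, rfl⟩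
    exact myNuStar_le_of_subset hlc hG hKG
  -- Part 3: `regPart G` is also the LUB of the cardinal densities over `G`.
  have part3 : ∀ G ∈ ℰ, IsLUB ((fun x : E => nuStar ℰ ν {x}) '' G) (regPart ℰ ν G) := by
    intro G hG
    constructor
    · rintro l ⟨x, hxG, rfl⟩
      refine (part1 G hG).1 ⟨{x}, ⟨?_, Set.singleton_subset_iff.mpr hxG⟩, rfl⟩
      exact isCompact_singleton
    · intro b hb
      refine (part1 G hG).2 ?_
      rintro l ⟨K, ⟨hK, hKG⟩, rfl⟩
      refine myNuStar_compact_le hc hlc hpav hν hK (fun x hx => ?_)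
      exact hb ⟨x, hKG hx, rfl⟩
  -- Part 4: regPart ≤ ν
  have part4 : ∀ G ∈ ℰ, regPart ℰ ν G ≤ ν G := by
    intro G hG
    refine (part1 G hG).2 ?_
    rintro l ⟨K, ⟨hK, hKG⟩, rfl⟩
    exact myNuStar_le_of_subset hlc hG hKG
  -- Part 2: complete maxitivity
  have part2 : IsCompletelyMaxitive ℰ (regPart ℰ ν) := by
    constructor
    · have hemp := part3 ∅ hpav.1.1
      simp only [Set.image_empty] at hemp
      exact hemp.unique isLUB_empty
    · intro 𝒢 h𝒢 hU
      constructor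
      · rintro l ⟨G, hG𝒢, rfl⟩
        refine (part3 G (h𝒢 hG𝒢)).2 ?_
        rintro l' ⟨x, hxG, rfl⟩
        exact (part3 _ hU).1 ⟨x, ⟨G, hG𝒢, hxG⟩, rfl⟩
      · intro b hb
        refine (part3 _ hU).2 ?_
        rintro l ⟨x, hxU, rfl⟩
        obtain ⟨G, hG𝒢, hxG⟩ := hxU
        exact le_trans ((part3 G (h𝒢 hG𝒢)).1 ⟨x, hxG, rfl⟩) (hb ⟨G, hG𝒢, rfl⟩)
  refine ⟨part1, part2, part3, part4, ?_⟩
  -- Part 5: greatest such measure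
  intro τ hτ hτν G hG
  have hτmono : ∀ A ∈ ℰ, ∀ B ∈ ℰ, A ⊆ B → τ A ≤ τ B :=
    fun A hA B hB hAB => myMono_of_cmax hτ hA hB hAB
  refine myLe_of_forall_wayAbove hc (fun u hu => ?_)
  -- for each x ∈ G, get small nbhd
  set 𝒢u : Set (Set E) := {H ∈ ℰ | H ⊆ G ∧ τ H ≤ u} with h𝒢u
  have hτν' : ∀ x ∈ G, nuStar ℰ τ {x} ≤ regPart ℰ ν G := by
    intro x hx
    have h1 : nuStar ℰ τ {x} ≤ nuStar ℰ ν {x} := by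
      obtain ⟨G₀, hG₀, hxG₀⟩ := (hpav.2 x).1
      have hτglb : IsGLB (τ '' {G' ∈ ℰ | ({x} : Set E) ⊆ G'}) (nuStar ℰ τ {x}) :=
        myPInf_isGLB hlc ⟨τ G₀, ⟨G₀, ⟨hG₀, Set.singleton_subset_iff.mpr hxG₀⟩, rfl⟩⟩
      have hνglb : IsGLB (ν '' {G' ∈ ℰ | ({x} : Set E) ⊆ G'}) (nuStar ℰ ν {x}) :=
        myPInf_isGLB hlc ⟨ν G₀, ⟨G₀, ⟨hG₀, Set.singleton_subset_iff.mpr hxG₀⟩, rfl⟩⟩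
      refine hνglb.2 ?_
      rintro l ⟨G', ⟨hG', hxG'⟩, rfl⟩
      exact le_trans (hτglb.1 ⟨G', ⟨hG', hxG'⟩, rfl⟩) (hτν G' hG')
    exact le_trans h1 ((part3 G hG).1 ⟨x, hx, rfl⟩)
  have hcover : ⋃₀ 𝒢u = G := by
    apply Set.Subset.antisymm
    · rintro y ⟨H, ⟨hH, hHG, _⟩, hyH⟩
      exact hHG hyH
    · intro x hx
      obtain ⟨G', hG', hxG', hG'u⟩ :=
        myExists_small_nbhd hlc hpav hτmono hu (hτν' x hx)
      obtain ⟨H, hH, hxH, hHG, hHG'⟩ := (hpav.2 x).2 G hG hx G' hG' hxG'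
      exact ⟨H, ⟨hH, hHG, le_trans (hτmono H hH G' hG' hHG') hG'u⟩, hxH⟩
  have hlub := hτ.2 𝒢u (fun H hH => hH.1) (by rw [hcover]; exact hG)
  rw [hcover] at hlub
  refine hlub.2 ?_
  rintro l ⟨H, hH, rfl⟩
  exact hH.2.2
end

section
/- Assume L is a locally continuous lattice, ℰ is a paving on E, and ν is an L-valued maxitive measure on ℰ. Then the extension (⌊ν⌋)* of the regular part coincides with ν* on 𝒦, i.e. ⌊ν⌋*(K) = ν*(K) for all K ∈ 𝒦, and consequently the regular part operation is idempotent: ⌊⌊ν⌋⌋ = ⌊ν⌋. -/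
open Set

variable {E L : Type*}

/-- In a locally complete poset with `⊥`, every nonempty set has an infimum. -/
lemma exists_isGLB_of_locallyComplete [PartialOrder L] [OrderBot L]
    (hlc : LocallyComplete L) {S : Set L} (hS : S.Nonempty) : ∃ a : L, IsGLB S a := by
  obtain ⟨s, hs⟩ := hS
  obtain ⟨a, ha⟩ := hlc (lowerBounds S) ⟨s, fun x hx => hx hs⟩
  exact ⟨a, fun t ht => ha.2 fun x hx => hx ht, ha.1⟩

lemma isLUB_pSup [PartialOrder L] [OrderBot L] {S : Set L}
    (h : ∃ a : L, IsLUB S a) : IsLUB S (pSup S) := by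
  rw [pSup, dif_pos h]
  exact h.choose_spec

/-- `⌊ν⌋*` and `ν*` coincide on `𝒦`, hence `⌊⌊ν⌋⌋ = ⌊ν⌋`. -/
theorem regPart_idempotent [Lattice L] [OrderBot L]
    (hc : ContinuousPoset L) (hlc : LocallyComplete L)
    (ℰ : Set (Set E)) (hpav : IsPaving ℰ)
    (ν : Set E → L) (hν : IsMaxitive ℰ ν) :
    (∀ K ∈ Kpt ℰ, nuStar ℰ (regPart ℰ ν) K = nuStar ℰ ν K) ∧
    ∀ G ∈ ℰ, regPart ℰ (regPart ℰ ν) G = regPart ℰ ν G := by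
  classical
  letI : TopologicalSpace E := TopologicalSpace.generateFrom ℰ
  -- finite unions of elements of ℰ lie in ℰ
  have hfin : ∀ S : Finset (Set E), (∀ G ∈ S, G ∈ ℰ) → ⋃₀ (S : Set (Set E)) ∈ ℰ := by
    intro S
    induction S using Finset.induction_on with
    | empty => intro _; simpa using hpav.1.1
    | @insert A S hA ih =>
      intro h
      rw [Finset.coe_insert, Set.sUnion_insert]
      exact hpav.1.2 _ (h _ (Finset.mem_insert_self _ _)) _
        (ih fun G hG => h G (Finset.mem_insert_of_mem hG))
  -- every compact set is covered by some element of ℰ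
  have hcov : ∀ K ∈ Kpt ℰ, ∃ G ∈ ℰ, K ⊆ G := by
    intro K hK
    have hK' : IsCompact K := hK
    choose U hUmem hUx using fun x : E => (hpav.2 x).1
    have hopen : ∀ x : E, IsOpen (U x) :=
      fun x => TopologicalSpace.GenerateOpen.basic _ (hUmem x)
    obtain ⟨t, ht⟩ := hK'.elim_finite_subcover U hopen
      (fun x _ => Set.mem_iUnion.2 ⟨x, hUx x⟩)
    refine ⟨⋃₀ ((t.image U : Finset (Set E)) : Set (Set E)), hfin _ ?_, ?_⟩
    · intro G hG
      obtain ⟨x, -, rfl⟩ := Finset.mem_image.1 hG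
      exact hUmem x
    · rw [Finset.coe_image, Set.sUnion_image]
      exact ht
  -- nuStar is a genuine GLB on sets with a superset in ℰ
  have hglb : ∀ (μ : Set E → L) (A : Set E), (∃ G ∈ ℰ, A ⊆ G) →
      IsGLB (μ '' {G ∈ ℰ | A ⊆ G}) (nuStar ℰ μ A) := by
    intro μ A ⟨G, hG, hAG⟩
    exact isGLB_pInf (exists_isGLB_of_locallyComplete hlc ⟨μ G, ⟨G, ⟨hG, hAG⟩, rfl⟩⟩)
  -- regPart is a genuine LUB on ℰ
  have hlub : ∀ G ∈ ℰ, IsLUB (nuStar ℰ ν '' {K ∈ Kpt ℰ | K ⊆ G}) (regPart ℰ ν G) := by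
    intro G hG
    refine isLUB_pSup (hlc _ ⟨ν G, ?_⟩)
    rintro x ⟨K, ⟨hK, hKG⟩, rfl⟩
    exact (hglb ν K ⟨G, hG, hKG⟩).1 ⟨G, ⟨hG, hKG⟩, rfl⟩
  -- regPart ν ≤ ν on ℰ
  have hle : ∀ G ∈ ℰ, regPart ℰ ν G ≤ ν G := by
    intro G hG
    refine (hlub G hG).2 ?_
    rintro x ⟨K, ⟨hK, hKG⟩, rfl⟩
    exact (hglb ν K ⟨G, hG, hKG⟩).1 ⟨G, ⟨hG, hKG⟩, rfl⟩
  -- nuStar ν K ≤ regPart ν G for compact K ⊆ G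
  have hmem : ∀ K ∈ Kpt ℰ, ∀ G ∈ ℰ, K ⊆ G → nuStar ℰ ν K ≤ regPart ℰ ν G :=
    fun K hK G hG hKG => (hlub G hG).1 ⟨K, ⟨hK, hKG⟩, rfl⟩
  have key : ∀ K ∈ Kpt ℰ, nuStar ℰ (regPart ℰ ν) K = nuStar ℰ ν K := by
    intro K hK
    have hne : ∃ G ∈ ℰ, K ⊆ G := hcov K hK
    have h1 := hglb (regPart ℰ ν) K hne
    have h2 := hglb ν K hne
    apply le_antisymm
    · refine h2.2 ?_
      rintro x ⟨G, ⟨hG, hKG⟩, rfl⟩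
      exact le_trans (h1.1 ⟨G, ⟨hG, hKG⟩, rfl⟩) (hle G hG)
    · refine h1.2 ?_
      rintro x ⟨G, ⟨hG, hKG⟩, rfl⟩
      exact hmem K hK G hG hKG
  refine ⟨key, fun G hG => ?_⟩
  unfold regPart
  congr 1
  exact Set.image_congr fun K hK => key K hK.1
end

section
/- Assume L is a locally continuous frame, ℰ is a paving on E, and ν is an L-valued maxitive measure on ℰ. Then the residual part satisfies ⊥(⊥ν) = ⊥ν, and the residual part of the regular part is zero: ⊥⌊ν⌋ = 0. -/
open Set

variable {E L : Type*}

section Aux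

variable [DistribLattice L] [OrderBot L]

lemma aux_exists_isGLB (hlc : LocallyComplete L) (S : Set L) (hS : S.Nonempty) :
    ∃ a : L, IsGLB S a := by
  obtain ⟨s, hs⟩ := hS
  obtain ⟨a, ha⟩ := hlc (lowerBounds S) ⟨s, fun b hb => hb hs⟩
  refine ⟨a, ⟨fun x hx => ha.2 fun b hb => hb hx, fun b hb => ha.1 hb⟩⟩

lemma aux_pInf_eq {S : Set L} {a : L} (h : IsGLB S a) : pInf S = a := by
  rw [pInf, dif_pos ⟨a, h⟩]
  exact (Exists.choose_spec (⟨a, h⟩ : ∃ a : L, IsGLB S a)).unique h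

lemma aux_pSup_eq {S : Set L} {a : L} (h : IsLUB S a) : pSup S = a := by
  rw [pSup, dif_pos ⟨a, h⟩]
  exact (Exists.choose_spec (⟨a, h⟩ : ∃ a : L, IsLUB S a)).unique h

lemma aux_pInf_le (hlc : LocallyComplete L) {S : Set L} {x : L} (hx : x ∈ S) :
    pInf S ≤ x := by
  obtain ⟨a, ha⟩ := aux_exists_isGLB hlc S ⟨x, hx⟩
  rw [aux_pInf_eq ha]; exact ha.1 hx

lemma aux_le_pInf (hlc : LocallyComplete L) {S : Set L} {b : L} (hS : S.Nonempty)
    (h : ∀ x ∈ S, b ≤ x) : b ≤ pInf S := by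
  obtain ⟨a, ha⟩ := aux_exists_isGLB hlc S hS
  rw [aux_pInf_eq ha]; exact ha.2 h

lemma aux_le_pSup (hlc : LocallyComplete L) {S : Set L} {x : L} (hS : BddAbove S)
    (hx : x ∈ S) : x ≤ pSup S := by
  obtain ⟨a, ha⟩ := hlc S hS
  rw [aux_pSup_eq ha]; exact ha.1 hx

lemma aux_pSup_le (hlc : LocallyComplete L) {S : Set L} {b : L}
    (h : ∀ x ∈ S, x ≤ b) : pSup S ≤ b := by
  obtain ⟨a, ha⟩ := hlc S ⟨b, h⟩
  rw [aux_pSup_eq ha]; exact ha.2 h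

lemma aux_nuStar_le (hlc : LocallyComplete L) {ℰ : Set (Set E)} {ν : Set E → L}
    {K G : Set E} (hG : G ∈ ℰ) (hKG : K ⊆ G) : nuStar ℰ ν K ≤ ν G :=
  aux_pInf_le hlc (mem_image_of_mem ν ⟨hG, hKG⟩)

lemma aux_nuStar_mono (hlc : LocallyComplete L) {ℰ : Set (Set E)} {f g : Set E → L}
    (hfg : ∀ G ∈ ℰ, f G ≤ g G) (K : Set E) : nuStar ℰ f K ≤ nuStar ℰ g K := by
  rcases eq_empty_or_nonempty {G ∈ ℰ | K ⊆ G} with hT | hT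
  · rw [nuStar, nuStar, hT]; simp only [image_empty]; exact le_refl _
  · refine aux_le_pInf hlc (hT.image g) ?_
    rintro x ⟨G, ⟨hG, hKG⟩, rfl⟩
    exact le_trans (aux_nuStar_le hlc hG hKG) (hfg G hG)

lemma aux_bddAbove_regSet (hlc : LocallyComplete L) {ℰ : Set (Set E)} {ν : Set E → L}
    {G : Set E} (hG : G ∈ ℰ) : BddAbove (nuStar ℰ ν '' {K ∈ Kpt ℰ | K ⊆ G}) := by
  refine ⟨ν G, ?_⟩
  rintro x ⟨K, ⟨_, hKG⟩, rfl⟩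
  exact aux_nuStar_le hlc hG hKG

lemma aux_regPart_le_self (hlc : LocallyComplete L) {ℰ : Set (Set E)} {ν : Set E → L}
    {G : Set E} (hG : G ∈ ℰ) : regPart ℰ ν G ≤ ν G := by
  refine aux_pSup_le hlc ?_
  rintro x ⟨K, ⟨_, hKG⟩, rfl⟩
  exact aux_nuStar_le hlc hG hKG

lemma aux_nuStar_le_regPart (hlc : LocallyComplete L) {ℰ : Set (Set E)} {ν : Set E → L}
    {K G : Set E} (hK : K ∈ Kpt ℰ) (hG : G ∈ ℰ) (hKG : K ⊆ G) :
    nuStar ℰ ν K ≤ regPart ℰ ν G :=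
  aux_le_pSup hlc (aux_bddAbove_regSet hlc hG) (mem_image_of_mem _ ⟨hK, hKG⟩)

lemma aux_regPart_mono (hlc : LocallyComplete L) {ℰ : Set (Set E)} {f g : Set E → L}
    (hfg : ∀ G ∈ ℰ, f G ≤ g G) {G : Set E} (hG : G ∈ ℰ) :
    regPart ℰ f G ≤ regPart ℰ g G := by
  refine aux_pSup_le hlc ?_
  rintro x ⟨K, ⟨hK, hKG⟩, rfl⟩
  exact le_trans (aux_nuStar_mono hlc hfg K) (aux_nuStar_le_regPart hlc hK hG hKG)

lemma aux_nuStar_le_nuStar_regPart (hlc : LocallyComplete L) {ℰ : Set (Set E)}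
    {ν : Set E → L} {K : Set E} (hK : K ∈ Kpt ℰ) :
    nuStar ℰ ν K ≤ nuStar ℰ (regPart ℰ ν) K := by
  rcases eq_empty_or_nonempty {G ∈ ℰ | K ⊆ G} with hT | hT
  · rw [nuStar, nuStar, hT]; simp only [image_empty]; exact le_refl _
  · refine aux_le_pInf hlc (hT.image _) ?_
    rintro x ⟨G, ⟨hG, hKG⟩, rfl⟩
    exact aux_nuStar_le_regPart hlc hK hG hKG

lemma aux_regPart_idem (hlc : LocallyComplete L) {ℰ : Set (Set E)} {ν : Set E → L}
    {G : Set E} (hG : G ∈ ℰ) : regPart ℰ (regPart ℰ ν) G = regPart ℰ ν G := by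
  refine le_antisymm (aux_regPart_le_self hlc hG) ?_
  refine aux_pSup_le hlc ?_
  rintro x ⟨K, ⟨hK, hKG⟩, rfl⟩
  exact le_trans (aux_nuStar_le_nuStar_regPart hlc hK)
    (aux_nuStar_le_regPart hlc hK hG hKG)

lemma aux_isMaxitive_bot (ℰ : Set (Set E)) : IsMaxitive ℰ (fun _ : Set E => (⊥ : L)) := by
  refine ⟨rfl, fun S _ _ => ?_⟩
  constructor
  · rintro x ⟨G, _, rfl⟩; exact le_refl _
  · exact fun b _ => bot_le

end Aux

/-- `⊥(⊥ν) = ⊥ν` and `⊥⌊ν⌋ = 0`. -/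
theorem residualPart_idempotent_and_residual_of_regPart_eq_bot
    [DistribLattice L] [OrderBot L]
    (hc : ContinuousPoset L) (hlc : LocallyComplete L)
    (ℰ : Set (Set E)) (hpav : IsPaving ℰ)
    (ν : Set E → L) (hν : IsMaxitive ℰ ν)
    (r r₂ q : Set E → L)
    (hr : IsResidualPart ℰ ν r)
    (hr₂ : IsResidualPart ℰ r r₂)
    (hq : IsResidualPart ℰ (regPart ℰ ν) q) :
    (∀ G ∈ ℰ, r₂ G = r G) ∧ ∀ G ∈ ℰ, q G = ⊥ := by
  have hrν : ∀ G ∈ ℰ, r G ≤ ν G := by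
    intro G hG; rw [hr.2.1 G hG]; exact le_sup_right
  constructor
  · intro G hG
    refine le_antisymm ?_ ?_
    · refine hr₂.2.2 r hr.1 (fun G' hG' => ?_) G hG
      exact (sup_eq_right.mpr (aux_regPart_le_self hlc hG')).symm
    · refine hr.2.2 r₂ hr₂.1 (fun G' hG' => ?_) G hG
      rw [hr.2.1 G' hG', hr₂.2.1 G' hG', ← sup_assoc,
        sup_eq_left.mpr (aux_regPart_mono hlc hrν hG')]
  · intro G hG
    refine le_antisymm ?_ bot_le
    refine hq.2.2 (fun _ => ⊥) (aux_isMaxitive_bot ℰ) (fun G' hG' => ?_) G hG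
    rw [sup_bot_eq, aux_regPart_idem hlc hG']
end
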